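/- arXiv:1805.12406 — 6 statements merged into one kernel-verified Lean document; each statement's English description precedes it below -/
import Mathlib

section
/- Let ω_r > 0 and γ ∈ (−1, 1]. For every ω > 0, the argument of the GFORE describing function satisfies arg G(ω) = arctan(Θ(ω)) − arctan(ω/ω_r). Consequently, for every γ ∈ (−1, 1) the describing-function phase strictly exceeds the phase −arctan(ω/ω_r) of the base linear first-order low-pass filter ω_r/(ω_r + i·ω) at every frequency ω > 0 (phase-lag reduction by reset). -/
/-- Describing-function correction term of GFORE with corner frequency `ωr`
and reset parameter `γ`, at frequency `ω`. -/
noncomputable def Theta (ωr γ ω : ℝ) : ℝ :=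
  (2 / Real.pi) * (1 + Real.exp (-Real.pi * ωr / ω)) *
    ((1 - γ) / (1 + γ * Real.exp (-Real.pi * ωr / ω))) * (ω ^ 2 / (ωr ^ 2 + ω ^ 2))

/-- Describing function of GFORE at frequency `ω`. -/
noncomputable def GforeDF (ωr γ ω : ℝ) : ℂ :=
  (ωr : ℂ) * (1 + Complex.I * (Theta ωr γ ω : ℝ)) / ((ωr : ℂ) + Complex.I * (ω : ℝ))

/-!
Dividing numerator and denominator by `ωr` writes `G(ω) = (1 + iΘ) / (1 + i ω/ωr)`. Both factors
lie in the right half-plane, with arguments `arctan Θ` and `arctan (ω/ωr)`, so the difference of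
the arguments lies in `(-π, π)` and is the argument of the quotient. For `γ ∈ (-1, 1)` every factor
of `Θ` is positive, hence `arctan Θ > 0`.
-/

open Real

namespace Complex

theorem arg_eq_arctan_of_re_pos {z : ℂ} (hz : 0 < z.re) : arg z = Real.arctan (z.im / z.re) := by
  obtain ⟨hlo, hhi⟩ := abs_lt.mp (abs_arg_lt_pi_div_two_iff.mpr (Or.inl hz))
  rw [← tan_arg, Real.arctan_tan hlo hhi]

theorem arg_div_of_sub_mem_Ioc {x y : ℂ} (hx : x ≠ 0) (hy : y ≠ 0)
    (h : arg x - arg y ∈ Set.Ioc (-π) π) : arg (x / y) = arg x - arg y := by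
  rw [← arg_coe_angle_toReal_eq_arg, arg_div_coe_angle hx hy, ← Real.Angle.coe_sub,
    Real.Angle.toReal_coe_eq_self_iff_mem_Ioc.mpr h]

theorem arg_one_add_I_mul (x : ℝ) : arg (1 + I * x) = Real.arctan x := by
  rw [arg_eq_arctan_of_re_pos] <;> simp

theorem one_add_I_mul_ne_zero (x : ℝ) : 1 + I * x ≠ 0 := fun h => by
  simpa using congrArg re h

theorem arg_one_add_I_mul_div (x y : ℝ) :
    arg ((1 + I * x) / (1 + I * y)) = Real.arctan x - Real.arctan y := by
  rw [← arg_one_add_I_mul x, ← arg_one_add_I_mul y]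
  refine arg_div_of_sub_mem_Ioc (one_add_I_mul_ne_zero x) (one_add_I_mul_ne_zero y) ?_
  rw [arg_one_add_I_mul, arg_one_add_I_mul]
  have hx := Real.arctan_mem_Ioo x
  have hy := Real.arctan_mem_Ioo y
  constructor <;> linarith [hx.1, hx.2, hy.1, hy.2]

end Complex

open Complex

theorem gforeDF_eq_div {ωr : ℝ} (hωr : ωr ≠ 0) (γ ω : ℝ) :
    GforeDF ωr γ ω = (1 + I * Theta ωr γ ω) / (1 + I * ↑(ω / ωr)) := by
  have hωr' : (ωr : ℂ) ≠ 0 := ofReal_ne_zero.mpr hωr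
  have hden : (ωr : ℂ) + I * ω = ωr * (1 + I * ↑(ω / ωr)) := by push_cast; field_simp
  rw [GforeDF, hden, mul_div_mul_left _ _ hωr']

theorem arg_gforeDF {ωr : ℝ} (hωr : ωr ≠ 0) (γ ω : ℝ) :
    arg (GforeDF ωr γ ω) = Real.arctan (Theta ωr γ ω) - Real.arctan (ω / ωr) := by
  rw [gforeDF_eq_div hωr, arg_one_add_I_mul_div]

theorem theta_pos {ωr γ ω : ℝ} (hωr : 0 < ωr) (hγ : γ ∈ Set.Ioo (-1 : ℝ) 1) (hω : 0 < ω) :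
    0 < Theta ωr γ ω := by
  obtain ⟨hγ₁, hγ₂⟩ := hγ
  set e := rexp (-π * ωr / ω)
  have he₀ : 0 < e := exp_pos _
  have he₁ : e < 1 := exp_lt_one_iff.mpr (by
    rw [neg_mul, neg_div]; exact neg_neg_of_pos (by positivity))
  have hden : 0 < 1 + γ * e := by nlinarith
  have : 0 < 1 - γ := by linarith
  unfold Theta
  positivity

theorem gfore_arg_general (ωr γ : ℝ) (hωr : 0 < ωr) :
    (∀ ω : ℝ, 0 < ω →
      Complex.arg (GforeDF ωr γ ω) = Real.arctan (Theta ωr γ ω) - Real.arctan (ω / ωr)) ∧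
    (γ ∈ Set.Ioo (-1 : ℝ) 1 → ∀ ω : ℝ, 0 < ω →
      Complex.arg (GforeDF ωr γ ω) > -Real.arctan (ω / ωr)) := by
  refine ⟨fun ω _ => arg_gforeDF hωr.ne' γ ω, fun hγ ω hω => ?_⟩
  have : 0 < Real.arctan (Theta ωr γ ω) := Real.arctan_pos.mpr (theta_pos hωr hγ hω)
  rw [arg_gforeDF hωr.ne']
  linarith

/-- For `ωr > 0` and `γ ∈ (−1, 1]`, the argument of the GFORE describing function is
`arctan (Θ(ω)) − arctan (ω/ωr)` for every `ω > 0`; consequently for `γ ∈ (−1, 1)` the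
describing-function phase strictly exceeds the phase `−arctan (ω/ωr)` of the base
linear first-order low-pass filter at every frequency (phase-lag reduction by reset). -/
theorem gfore_arg (ωr γ : ℝ) (hωr : 0 < ωr) (hγ : γ ∈ Set.Ioc (-1 : ℝ) 1) :
    (∀ ω : ℝ, 0 < ω →
      Complex.arg (GforeDF ωr γ ω) = Real.arctan (Theta ωr γ ω) - Real.arctan (ω / ωr)) ∧
    (γ ∈ Set.Ioo (-1 : ℝ) 1 → ∀ ω : ℝ, 0 < ω →
      Complex.arg (GforeDF ωr γ ω) > -Real.arctan (ω / ωr)) :=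
  gfore_arg_general ωr γ hωr
end

section
/- Fix ω_r > 0 and ω > 0. The map γ ↦ Θ(ω; γ) is strictly decreasing on (−1, 1]. Consequently the describing-function phase arctan(Θ(ω; γ)) − arctan(ω/ω_r) of GFORE is strictly decreasing in γ: smaller values of the reset parameter γ give strictly larger phase-lag reduction at every frequency. -/
/-- For fixed `ωr > 0` and `ω > 0`, the map `γ ↦ Θ(ω; γ)` is strictly decreasing on
`(−1, 1]`, and consequently so is the GFORE describing-function phase
`arctan (Θ(ω; γ)) − arctan (ω/ωr)`. -/
theorem theta_strictAntiOn (ωr ω : ℝ) (hωr : 0 < ωr) (hω : 0 < ω) :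
    StrictAntiOn (fun γ : ℝ => Theta ωr γ ω) (Set.Ioc (-1 : ℝ) 1) ∧
    StrictAntiOn (fun γ : ℝ => Real.arctan (Theta ωr γ ω) - Real.arctan (ω / ωr))
      (Set.Ioc (-1 : ℝ) 1) := by
  set E := Real.exp (-Real.pi * ωr / ω) with hE
  have hE0 : 0 < E := Real.exp_pos _
  have hE1 : E < 1 := by
    rw [hE, Real.exp_lt_one_iff]
    have hπ : 0 < Real.pi := Real.pi_pos
    have : 0 < Real.pi * ωr := by positivity
    apply div_neg_of_neg_of_pos _ hω
    nlinarith [Real.pi_pos]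
  have key : StrictAntiOn (fun γ : ℝ => Theta ωr γ ω) (Set.Ioc (-1 : ℝ) 1) := by
    intro a ha b hb hab
    have ha1 : -1 < a := ha.1
    have hb1 : -1 < b := hb.1
    have hda : 0 < 1 + a * E := by nlinarith
    have hdb : 0 < 1 + b * E := by nlinarith
    have hratio : (1 - b) / (1 + b * E) < (1 - a) / (1 + a * E) := by
      rw [div_lt_div_iff₀ hdb hda]
      nlinarith
    simp only [Theta, ← hE]
    have hπ : 0 < Real.pi := Real.pi_pos
    gcongr
  refine ⟨key, ?_⟩
  intro a ha b hb hab
  have := key ha hb hab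
  simp only
  have h2 := Real.arctan_strictMono this
  simp only at h2 ⊢
  linarith
end

section
/- Let ω_r > 0 and γ ∈ (−1, 1]. Then ω·|G(ω)| → ω_r·√(1 + ((4/π)·(1 − γ)/(1 + γ))²) as ω → ∞, where G(ω) is the GFORE describing function; i.e., at high frequency the describing-function magnitude of GFORE decays like a constant times 1/ω, preserving the −20 dB per decade slope of the base linear first-order low-pass filter. -/
/-! As `ω → ∞`, `exp (-π ωr / ω) → 1` and `ω² / (ωr² + ω²) → 1`, so `Θ(ω)` tends to
`(2/π)·2·(1 - γ)/(1 + γ)`. Since `|G(ω)| = ωr·√(1 + Θ(ω)²) / √(ωr² + ω²)` and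
`ω / √(ωr² + ω²) → 1`, the product `ω·|G(ω)|` tends to `ωr·√(1 + Θ(∞)²)`. -/

open Filter Topology Real

lemma tendsto_exp_const_div_atTop (c : ℝ) :
    Tendsto (fun ω : ℝ => exp (c / ω)) atTop (𝓝 1) := by
  simpa [Function.comp_def] using
    (continuous_exp.tendsto 0).comp (tendsto_const_nhds (x := c).div_atTop tendsto_id)

lemma tendsto_sq_div_const_add_sq (a : ℝ) :
    Tendsto (fun ω : ℝ => ω ^ 2 / (a + ω ^ 2)) atTop (𝓝 1) := by
  have hden : Tendsto (fun ω : ℝ => a + ω ^ 2) atTop atTop :=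
    tendsto_atTop_add_const_left _ a (tendsto_pow_atTop two_ne_zero)
  have hlim : Tendsto (fun ω : ℝ => 1 - a / (a + ω ^ 2)) atTop (𝓝 (1 - 0)) :=
    tendsto_const_nhds.sub (tendsto_const_nhds.div_atTop hden)
  rw [sub_zero] at hlim
  refine hlim.congr' ?_
  filter_upwards [hden.eventually_gt_atTop 0] with ω hω
  field_simp
  ring

lemma tendsto_div_sqrt_const_add_sq (a : ℝ) :
    Tendsto (fun ω : ℝ => ω / √(a + ω ^ 2)) atTop (𝓝 1) := by
  have hlim := (continuous_sqrt.tendsto 1).comp (tendsto_sq_div_const_add_sq a)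
  rw [sqrt_one] at hlim
  refine hlim.congr' ?_
  filter_upwards [eventually_ge_atTop 0] with ω hω
  rw [Function.comp_apply, sqrt_div (sq_nonneg ω), sqrt_sq hω]

lemma tendsto_Theta_atTop (ωr : ℝ) {γ : ℝ} (hγ : 1 + γ ≠ 0) :
    Tendsto (Theta ωr γ) atTop (𝓝 ((4 / π) * (1 - γ) / (1 + γ))) := by
  have hexp := tendsto_exp_const_div_atTop (-π * ωr)
  have hfrac : Tendsto (fun ω => (1 - γ) / (1 + γ * exp (-π * ωr / ω))) atTop
      (𝓝 ((1 - γ) / (1 + γ * 1))) :=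
    tendsto_const_nhds.div (hexp.const_mul γ |>.const_add 1) (by simpa using hγ)
  have hlim := ((tendsto_const_nhds (x := 2 / π) |>.mul (hexp.const_add 1)).mul hfrac).mul
    (tendsto_sq_div_const_add_sq (ωr ^ 2))
  rw [show 4 / π * (1 - γ) / (1 + γ) = 2 / π * (1 + 1) * ((1 - γ) / (1 + γ * 1)) * 1 by ring]
  exact hlim

lemma norm_one_add_I_mul (x : ℝ) : ‖1 + Complex.I * x‖ = √(1 + x ^ 2) := by
  simpa [mul_comm] using Complex.norm_add_mul_I 1 x

lemma norm_GforeDF {ωr : ℝ} (hωr : 0 ≤ ωr) (γ ω : ℝ) :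
    ‖GforeDF ωr γ ω‖ = ωr * √(1 + Theta ωr γ ω ^ 2) / √(ωr ^ 2 + ω ^ 2) := by
  rw [GforeDF, norm_div, norm_mul, norm_one_add_I_mul, mul_comm Complex.I,
    Complex.norm_add_mul_I, Complex.norm_real, Real.norm_of_nonneg hωr]

/-- For `ωr > 0` and `γ ∈ (−1, 1]`, at high frequency the GFORE describing-function
magnitude decays like a constant times `1/ω`:
`ω·|G(ω)| → ωr·√(1 + ((4/π)·(1 − γ)/(1 + γ))²)` as `ω → ∞`. -/
theorem gfore_highfreq_gain (ωr γ : ℝ) (hωr : 0 < ωr) (hγ : γ ∈ Set.Ioc (-1 : ℝ) 1) :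
    Filter.Tendsto (fun ω : ℝ => ω * ‖GforeDF ωr γ ω‖) Filter.atTop
      (nhds (ωr * Real.sqrt (1 + ((4 / Real.pi) * (1 - γ) / (1 + γ)) ^ 2))) := by
  have hγ_ne : 1 + γ ≠ 0 := by linarith [hγ.1]
  have hgain : Tendsto (fun ω => ωr * √(1 + Theta ωr γ ω ^ 2)) atTop
      (𝓝 (ωr * √(1 + ((4 / π) * (1 - γ) / (1 + γ)) ^ 2))) :=
    tendsto_const_nhds.mul
      ((continuous_sqrt.tendsto _).comp (((tendsto_Theta_atTop ωr hγ_ne).pow 2).const_add 1))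
  have hlim := hgain.mul (tendsto_div_sqrt_const_add_sq (ωr ^ 2))
  rw [mul_one] at hlim
  refine hlim.congr fun ω => ?_
  rw [norm_GforeDF hωr.le]
  ring
end

section
/- Let ω_r > 0 and γ ∈ (−1, 1). The map ω ↦ Θ(ω) is strictly increasing on (0, ∞). Consequently the phase lead arctan(Θ(ω)) contributed by reset in the GFORE describing function is strictly increasing in frequency. -/
lemma theta_mono_aux (ωr γ : ℝ) (hωr : 0 < ωr) (hγ : γ ∈ Set.Ioo (-1 : ℝ) 1) :
    StrictMonoOn (fun ω : ℝ => Theta ωr γ ω) (Set.Ioi 0) := by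
  intro a ha b hb hab
  simp only [Set.mem_Ioi] at ha hb
  set Ea := Real.exp (-Real.pi * ωr / a) with hEa
  set Eb := Real.exp (-Real.pi * ωr / b) with hEb
  have hπ : 0 < Real.pi := Real.pi_pos
  have hEapos : 0 < Ea := Real.exp_pos _
  have hEbpos : 0 < Eb := Real.exp_pos _
  have hEa1 : Ea < 1 := by
    rw [hEa, Real.exp_lt_one_iff]
    have h1 : 0 < Real.pi * ωr / a := by positivity
    have h2 : -Real.pi * ωr / a = -(Real.pi * ωr / a) := by ring
    linarith
  have hEb1 : Eb < 1 := by
    rw [hEb, Real.exp_lt_one_iff]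
    have h1 : 0 < Real.pi * ωr / b := by positivity
    have h2 : -Real.pi * ωr / b = -(Real.pi * ωr / b) := by ring
    linarith
  have hEab : Ea < Eb := by
    apply Real.exp_lt_exp.mpr
    rw [div_lt_div_iff₀ ha hb]
    nlinarith [mul_pos hπ hωr]
  have hDa : 0 < 1 + γ * Ea := by nlinarith [mul_pos (by linarith [hγ.1] : (0:ℝ) < γ + 1) hEapos]
  have hDb : 0 < 1 + γ * Eb := by nlinarith [mul_pos (by linarith [hγ.1] : (0:ℝ) < γ + 1) hEbpos]
  have hSa : 0 < ωr ^ 2 + a ^ 2 := by positivity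
  have hSb : 0 < ωr ^ 2 + b ^ 2 := by positivity
  have hγ1 : 0 < 1 - γ := by linarith [hγ.2]
  have hrwa : Theta ωr γ a =
      (2 * (1 + Ea) * (1 - γ) * a ^ 2) / (Real.pi * ((1 + γ * Ea) * (ωr ^ 2 + a ^ 2))) := by
    unfold Theta
    rw [← hEa]
    field_simp
  have hrwb : Theta ωr γ b =
      (2 * (1 + Eb) * (1 - γ) * b ^ 2) / (Real.pi * ((1 + γ * Eb) * (ωr ^ 2 + b ^ 2))) := by
    unfold Theta
    rw [← hEb]
    field_simp
  simp only [hrwa, hrwb]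
  rw [div_lt_div_iff₀ (by positivity) (by positivity)]
  -- key polynomial inequalities
  have hab2 : a ^ 2 < b ^ 2 := by nlinarith
  have P1 : a ^ 2 * (ωr ^ 2 + b ^ 2) < b ^ 2 * (ωr ^ 2 + a ^ 2) := by
    nlinarith [mul_lt_mul_of_pos_right hab2 (by positivity : (0:ℝ) < ωr ^ 2)]
  have P2 : (1 + Ea) * (1 + γ * Eb) < (1 + Eb) * (1 + γ * Ea) := by nlinarith
  have key : (a ^ 2 * (ωr ^ 2 + b ^ 2)) * ((1 + Ea) * (1 + γ * Eb)) <
      (b ^ 2 * (ωr ^ 2 + a ^ 2)) * ((1 + Eb) * (1 + γ * Ea)) := by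
    apply mul_lt_mul'' P1 P2 (by positivity) (by positivity)
  have hc : 0 < 2 * Real.pi * (1 - γ) := by positivity
  calc 2 * (1 + Ea) * (1 - γ) * a ^ 2 * (Real.pi * ((1 + γ * Eb) * (ωr ^ 2 + b ^ 2)))
      = (2 * Real.pi * (1 - γ)) *
        ((a ^ 2 * (ωr ^ 2 + b ^ 2)) * ((1 + Ea) * (1 + γ * Eb))) := by ring
    _ < (2 * Real.pi * (1 - γ)) *
        ((b ^ 2 * (ωr ^ 2 + a ^ 2)) * ((1 + Eb) * (1 + γ * Ea))) :=
        mul_lt_mul_of_pos_left key hc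
    _ = 2 * (1 + Eb) * (1 - γ) * b ^ 2 * (Real.pi * ((1 + γ * Ea) * (ωr ^ 2 + a ^ 2))) := by
        ring

/-- For `ωr > 0` and `γ ∈ (−1, 1)`, the map `ω ↦ Θ(ω)` is strictly increasing on
`(0, ∞)`; consequently the reset phase lead `arctan (Θ(ω))` is strictly increasing
in frequency. -/
theorem theta_strictMonoOn (ωr γ : ℝ) (hωr : 0 < ωr) (hγ : γ ∈ Set.Ioo (-1 : ℝ) 1) :
    StrictMonoOn (fun ω : ℝ => Theta ωr γ ω) (Set.Ioi 0) ∧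
    StrictMonoOn (fun ω : ℝ => Real.arctan (Theta ωr γ ω)) (Set.Ioi 0) := by
  have h := theta_mono_aux ωr γ hωr hγ
  exact ⟨h, fun a ha b hb hab => Real.arctan_strictMono (h ha hb hab)⟩
end

section
/- Let ω_r > 0, ω_f > ω_r and γ ∈ [0, 1]. For every ω with 0 < ω ≤ ω_f, the magnitude of the CgLp describing function satisfies 1/√2 ≤ |D(ω)| ≤ √(1 + 16/π²); i.e., over the whole band (0, ω_f] the CgLp gain stays within fixed constant bounds independent of ω, ω_r and ω_f (the 'constant in gain' property). -/
/-- Describing function of the CgLp element (GFORE in series with the linear lead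
filter `(1 + iω/ωr)/(1 + iω/ωf)`) at frequency `ω`. -/
noncomputable def CgLpDF (ωr ωf γ ω : ℝ) : ℂ :=
  (1 + Complex.I * (Theta ωr γ ω : ℝ)) / (1 + Complex.I * ((ω / ωf : ℝ) : ℂ))

/-!
The numerator `1 + iΘ` has modulus between `1` and `√(1 + 16/π²)`, because
`0 ≤ Θ ≤ 4/π`: in `Θ = (2/π)(1 + e^{-πω_r/ω}) · (1 - γ)/(1 + γe^{-πω_r/ω}) · ω²/(ω_r² + ω²)`
the last three factors are at most `2`, `1` and `1`. The denominator `1 + iω/ω_f` has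
modulus between `1` and `√2` as long as `0 ≤ ω ≤ ω_f`.
-/

open Real

lemma norm_one_add_I_mul_ofReal (t : ℝ) : ‖1 + Complex.I * t‖ = √(1 + t ^ 2) := by
  rw [Complex.norm_def, Complex.normSq_apply]
  congr 1
  simp
  ring

lemma norm_cgLpDF (ωr ωf γ ω : ℝ) :
    ‖CgLpDF ωr ωf γ ω‖ = √((1 + Theta ωr γ ω ^ 2) / (1 + (ω / ωf) ^ 2)) := by
  rw [CgLpDF, norm_div, norm_one_add_I_mul_ofReal, norm_one_add_I_mul_ofReal, sqrt_div']
  positivity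

section Theta

variable {ωr γ ω : ℝ}

lemma Theta_nonneg (hγ : γ ∈ Set.Icc (0 : ℝ) 1) : 0 ≤ Theta ωr γ ω := by
  obtain ⟨hγ0, hγ1⟩ := hγ
  unfold Theta
  have := pi_pos
  have := exp_pos (-π * ωr / ω)
  have : 0 ≤ 1 - γ := by linarith
  positivity

lemma Theta_le_four_div_pi (hωr : 0 ≤ ωr) (hγ : γ ∈ Set.Icc (0 : ℝ) 1) (hω : 0 ≤ ω) :
    Theta ωr γ ω ≤ 4 / π := by
  obtain ⟨hγ0, hγ1⟩ := hγ
  set x := exp (-π * ωr / ω)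
  have hx0 : 0 < x := exp_pos _
  have hx1 : x ≤ 1 := exp_le_one_iff.mpr <|
    div_nonpos_of_nonpos_of_nonneg (by nlinarith [pi_pos]) hω
  have hreset : (1 - γ) / (1 + γ * x) ≤ 1 := by
    rw [div_le_one (by positivity)]
    nlinarith
  have hfreq : ω ^ 2 / (ωr ^ 2 + ω ^ 2) ≤ 1 := div_le_one_of_le₀ (by nlinarith) (by positivity)
  calc Theta ωr γ ω
      = 2 / π * (1 + x) * ((1 - γ) / (1 + γ * x)) * (ω ^ 2 / (ωr ^ 2 + ω ^ 2)) := rfl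
    _ ≤ 2 / π * 2 * 1 * 1 := by
        have := pi_pos
        gcongr
        linarith
    _ = 4 / π := by ring

lemma Theta_sq_le (hωr : 0 ≤ ωr) (hγ : γ ∈ Set.Icc (0 : ℝ) 1) (hω : 0 ≤ ω) :
    Theta ωr γ ω ^ 2 ≤ 16 / π ^ 2 := by
  calc Theta ωr γ ω ^ 2 ≤ (4 / π) ^ 2 :=
        pow_le_pow_left₀ (Theta_nonneg hγ) (Theta_le_four_div_pi hωr hγ hω) 2
    _ = 16 / π ^ 2 := by ring

end Theta

theorem cglp_constant_gain_general (ωr ωf γ : ℝ) (hωr : 0 < ωr)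
    (hγ : γ ∈ Set.Icc (0 : ℝ) 1) (ω : ℝ) (hω : 0 < ω) (hωle : ω ≤ ωf) :
    1 / Real.sqrt 2 ≤ ‖CgLpDF ωr ωf γ ω‖ ∧
    ‖CgLpDF ωr ωf γ ω‖ ≤ Real.sqrt (1 + 16 / Real.pi ^ 2) := by
  have hΘ := Theta_sq_le hωr.le hγ hω.le
  have hlead : (ω / ωf) ^ 2 ≤ 1 := by
    rw [div_pow, div_le_one (by nlinarith)]
    nlinarith
  rw [norm_cgLpDF, one_div, ← sqrt_inv]
  constructor <;> apply sqrt_le_sqrt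
  · rw [le_div_iff₀ (by positivity)]
    nlinarith
  · rw [div_le_iff₀ (by positivity)]
    nlinarith [sq_nonneg (ω / ωf)]

/-- For `ωr > 0`, `ωf > ωr` and `γ ∈ [0, 1]`, over the whole band `0 < ω ≤ ωf` the CgLp
describing-function magnitude stays within fixed constant bounds:
`1/√2 ≤ |D(ω)| ≤ √(1 + 16/π²)` (the "constant in gain" property). -/
theorem cglp_constant_gain (ωr ωf γ : ℝ) (hωr : 0 < ωr) (hωf : ωr < ωf)
    (hγ : γ ∈ Set.Icc (0 : ℝ) 1) (ω : ℝ) (hω : 0 < ω) (hωle : ω ≤ ωf) :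
    1 / Real.sqrt 2 ≤ ‖CgLpDF ωr ωf γ ω‖ ∧
    ‖CgLpDF ωr ωf γ ω‖ ≤ Real.sqrt (1 + 16 / Real.pi ^ 2) :=
  cglp_constant_gain_general ωr ωf γ hωr hγ ω hω hωle
end

section
/- Let n_p, n_nr, n_r be natural numbers and let P be a symmetric positive semidefinite real (n_p + n_nr + n_r) × (n_p + n_nr + n_r) matrix whose block partition corresponding to plant states x_p ∈ ℝ^{n_p}, non-resetting controller states x_nr ∈ ℝ^{n_nr} and resetting controller states x_r ∈ ℝ^{n_r} satisfies: the (resetting, plant) block equals β·C_p for some column vector β ∈ ℝ^{n_r} and row vector C_p ∈ ℝ^{1×n_p}, the (resetting, non-resetting) block is zero, and the (resetting, resetting) block P_ρ is positive semidefinite. Let γ ∈ ℝ with γ² ≤ 1 and let x = (x_p, x_nr, x_r) be a state at a reset instant, i.e., C_p·x_p = 0. Then the Lyapunov function V(x) = xᵀ P x does not increase under the reset jump x⁺ = (x_p, x_nr, γ·x_r): one has (x⁺)ᵀ P x⁺ ≤ xᵀ P x. -/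
/-!
Split a state into its non-resetting part `w = (x_p, x_nr, 0)` and its resetting part
`z = (0, 0, x_r)`, so that `x = w + z` and the jump sends `x` to `w + γ z`. The block
structure of `P` gives `zᵀ P w = (x_rᵀ β)(C_p x_p)`, which vanishes at a reset instant; for
`P`-orthogonal `w, z` one has `V(w + t z) = V(w) + t² V(z)`, and `V(z) = x_rᵀ P_ρ x_r ≥ 0`,
so `γ² ≤ 1` gives `V(w + γ z) ≤ V(w + z)`.
-/

open Matrix

namespace Matrix

section QuadraticForm

variable {n R : Type*} [Fintype n]

theorem dotProduct_mulVec_add_smul_of_orthogonal [CommRing R] {P : Matrix n n R}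
    (hP : P.IsSymm) {w z : n → R} (hwz : z ⬝ᵥ P *ᵥ w = 0) (t : R) :
    (w + t • z) ⬝ᵥ P *ᵥ (w + t • z) = w ⬝ᵥ P *ᵥ w + t ^ 2 * (z ⬝ᵥ P *ᵥ z) := by
  have hzw : w ⬝ᵥ P *ᵥ z = 0 := by
    rw [← hP.eq, dotProduct_transpose_mulVec, hwz]
  simp only [mulVec_add, mulVec_smul, add_dotProduct, dotProduct_add, smul_dotProduct,
    dotProduct_smul, smul_eq_mul, hwz, hzw]
  ring

theorem dotProduct_mulVec_add_smul_le_of_orthogonal [CommRing R] [LinearOrder R]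
    [IsStrictOrderedRing R] {P : Matrix n n R} (hP : P.IsSymm) {w z : n → R}
    (hwz : z ⬝ᵥ P *ᵥ w = 0) (hz : 0 ≤ z ⬝ᵥ P *ᵥ z) {t : R} (ht : t ^ 2 ≤ 1) :
    (w + t • z) ⬝ᵥ P *ᵥ (w + t • z) ≤ (w + z) ⬝ᵥ P *ᵥ (w + z) := by
  have h := dotProduct_mulVec_add_smul_of_orthogonal hP hwz 1
  rw [one_smul] at h
  rw [h, dotProduct_mulVec_add_smul_of_orthogonal hP hwz t]
  nlinarith

end QuadraticForm

end Matrix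

section ResetJump

variable {p q r R : Type*} [Fintype p] [Fintype q] [Fintype r] [CommSemiring R]

theorem resetPart_dotProduct_mulVec_nonresetPart {P : Matrix (p ⊕ q ⊕ r) (p ⊕ q ⊕ r) R}
    {β : r → R} {Cp : p → R}
    (hblock_p : ∀ i j, P (Sum.inr (Sum.inr i)) (Sum.inl j) = β i * Cp j)
    (hblock_nr : ∀ i j, P (Sum.inr (Sum.inr i)) (Sum.inr (Sum.inl j)) = 0)
    (u : p → R) (v : q → R) (c : r → R) :
    Sum.elim (0 : p → R) (Sum.elim (0 : q → R) c) ⬝ᵥ P *ᵥ Sum.elim u (Sum.elim v 0) =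
      (c ⬝ᵥ β) * (Cp ⬝ᵥ u) := by
  simp only [dotProduct, mulVec, Fintype.sum_sum_type, Sum.elim_inl, Sum.elim_inr, hblock_p,
    hblock_nr, Pi.zero_apply, zero_mul, mul_zero, Finset.sum_const_zero, add_zero, zero_add,
    mul_assoc, ← Finset.mul_sum]
  simp only [← mul_assoc, ← Finset.sum_mul]

theorem resetPart_dotProduct_mulVec_resetPart (P : Matrix (p ⊕ q ⊕ r) (p ⊕ q ⊕ r) R)
    (c : r → R) :
    Sum.elim (0 : p → R) (Sum.elim (0 : q → R) c) ⬝ᵥ P *ᵥ Sum.elim 0 (Sum.elim 0 c) =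
      c ⬝ᵥ P.submatrix (Sum.inr ∘ Sum.inr) (Sum.inr ∘ Sum.inr) *ᵥ c := by
  simp [dotProduct, mulVec, Fintype.sum_sum_type]

end ResetJump

theorem reset_jump_lyapunov_nonincreasing_general
    (n_p n_nr n_r : ℕ)
    (P : Matrix (Fin n_p ⊕ Fin n_nr ⊕ Fin n_r) (Fin n_p ⊕ Fin n_nr ⊕ Fin n_r) ℝ)
    (hPsymm : P.IsSymm)
    (β : Fin n_r → ℝ) (Cp : Fin n_p → ℝ)
    (hblock_p : ∀ (i : Fin n_r) (j : Fin n_p),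
      P (Sum.inr (Sum.inr i)) (Sum.inl j) = β i * Cp j)
    (hblock_nr : ∀ (i : Fin n_r) (j : Fin n_nr),
      P (Sum.inr (Sum.inr i)) (Sum.inr (Sum.inl j)) = 0)
    (hPρ : (Matrix.of fun i j : Fin n_r =>
      P (Sum.inr (Sum.inr i)) (Sum.inr (Sum.inr j))).PosSemidef)
    (γ : ℝ) (hγ : γ ^ 2 ≤ 1)
    (x : (Fin n_p ⊕ Fin n_nr ⊕ Fin n_r) → ℝ)
    (hreset : ∑ j : Fin n_p, Cp j * x (Sum.inl j) = 0) :
    (Sum.elim (fun i => x (Sum.inl i))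
        (Sum.elim (fun i => x (Sum.inr (Sum.inl i)))
          (fun i => γ * x (Sum.inr (Sum.inr i))))) ⬝ᵥ
      P.mulVec (Sum.elim (fun i => x (Sum.inl i))
        (Sum.elim (fun i => x (Sum.inr (Sum.inl i)))
          (fun i => γ * x (Sum.inr (Sum.inr i))))) ≤
    x ⬝ᵥ P.mulVec x := by
  set u : Fin n_p → ℝ := fun i => x (Sum.inl i)
  set v : Fin n_nr → ℝ := fun i => x (Sum.inr (Sum.inl i))
  set c : Fin n_r → ℝ := fun i => x (Sum.inr (Sum.inr i))
  set w := Sum.elim u (Sum.elim v (0 : Fin n_r → ℝ))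
  set z := Sum.elim (0 : Fin n_p → ℝ) (Sum.elim (0 : Fin n_nr → ℝ) c)
  have hjump : Sum.elim u (Sum.elim v fun i => γ * c i) = w + γ • z := by
    ext (i | i | i) <;> simp [w, z]
  have hx : x = w + z := by
    ext (i | i | i) <;> simp [w, z, u, v, c]
  have horth : z ⬝ᵥ P *ᵥ w = 0 := by
    have hCp : Cp ⬝ᵥ u = 0 := hreset
    rw [resetPart_dotProduct_mulVec_nonresetPart hblock_p hblock_nr, hCp, mul_zero]
  have hz : 0 ≤ z ⬝ᵥ P *ᵥ z := by
    rw [resetPart_dotProduct_mulVec_resetPart]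
    exact hPρ.dotProduct_mulVec_nonneg c
  rw [hjump, hx]
  exact dotProduct_mulVec_add_smul_le_of_orthogonal hPsymm horth hz hγ

/-- Under the restricted Lyapunov condition of the quadratic stability theorem for
reset systems (the (resetting, plant) block of `P` equals `β·C_p`, the
(resetting, non-resetting) block vanishes, and the (resetting, resetting) block `P_ρ`
is positive semidefinite), the quadratic Lyapunov function `V(x) = xᵀ P x` does not
increase across a reset jump `x_r ↦ γ·x_r` (with `γ² ≤ 1`) occurring at a reset
instant, i.e. when `C_p·x_p = 0`. -/
theorem reset_jump_lyapunov_nonincreasing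
    (n_p n_nr n_r : ℕ)
    (P : Matrix (Fin n_p ⊕ Fin n_nr ⊕ Fin n_r) (Fin n_p ⊕ Fin n_nr ⊕ Fin n_r) ℝ)
    (hPsymm : P.IsSymm) (hP : P.PosSemidef)
    (β : Fin n_r → ℝ) (Cp : Fin n_p → ℝ)
    (hblock_p : ∀ (i : Fin n_r) (j : Fin n_p),
      P (Sum.inr (Sum.inr i)) (Sum.inl j) = β i * Cp j)
    (hblock_nr : ∀ (i : Fin n_r) (j : Fin n_nr),
      P (Sum.inr (Sum.inr i)) (Sum.inr (Sum.inl j)) = 0)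
    (hPρ : (Matrix.of fun i j : Fin n_r =>
      P (Sum.inr (Sum.inr i)) (Sum.inr (Sum.inr j))).PosSemidef)
    (γ : ℝ) (hγ : γ ^ 2 ≤ 1)
    (x : (Fin n_p ⊕ Fin n_nr ⊕ Fin n_r) → ℝ)
    (hreset : ∑ j : Fin n_p, Cp j * x (Sum.inl j) = 0) :
    (Sum.elim (fun i => x (Sum.inl i))
        (Sum.elim (fun i => x (Sum.inr (Sum.inl i)))
          (fun i => γ * x (Sum.inr (Sum.inr i))))) ⬝ᵥ
      P.mulVec (Sum.elim (fun i => x (Sum.inl i))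
        (Sum.elim (fun i => x (Sum.inr (Sum.inl i)))
          (fun i => γ * x (Sum.inr (Sum.inr i))))) ≤
    x ⬝ᵥ P.mulVec x :=
  reset_jump_lyapunov_nonincreasing_general n_p n_nr n_r P hPsymm β Cp hblock_p hblock_nr hPρ γ hγ x
    hreset
end
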